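/- Let α ∈ (1/2, 1), β ∈ (1/2, 1/2 + α), θ₁ > 0, and let δ*, η* ∈ ℝ satisfy δ* < 1 + 2α − 2β·1_{{α≠β}} and η* < 2β − 1 (where 1_{{α≠β}} equals 1 if α ≠ β and 0 if α = β). Then for every θ ≥ θ₁: ∫_0^1 |ξ_{α,β}(x;θ)|² x^{−δ*} dx + ∫_1^∞ |ξ_{α,β}(x;θ)|² x^{η*} dx ≤ ( (|sin(βπ)| θ₁^{−2} + |sin((α−β)π)| θ₁^{−1}) / (π sin²(απ)) )² / (1 + 2α − 2β·1_{{α≠β}} − δ*) + ( |sin(βπ)| / (π sin²(απ)) + |sin((α−β)π)| / (2π (1 + cos(απ))) )² / (2β − 1 − η*). -/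

import Mathlib

/-!
On `(0, 1]` the function `|ξ_{α,β}(·;θ)|` is bounded by `C₁ x^{α − β·1_{α≠β}}`, and on
`(0, ∞)` by `C₂ x^{−β}`, where `C₁`, `C₂` are the constants in the squares on the right-hand
side. Both come from the denominator `θ² + 2θ cos(απ) x^α + x^{2α} = |θ + x^α e^{iαπ}|²`,
which dominates `θ² sin²(απ)`, `x^{2α} sin²(απ)` and `2θ x^α (1 + cos(απ))`; when `α = β` the
term with `sin((α − β)π)` vanishes. Squaring, multiplying by the weight and integrating the
resulting power of `x` over `(0, 1]` resp. `(1, ∞)` gives the two summands.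
-/

open MeasureTheory Real Set

/-- The density `ξ_{α,β}(x;θ)` of the Bernstein measure of the fractional resolvent:
`ξ_{α,β}(x;θ) = (1/π) (x^{2α−β} sin(βπ) − θ x^{α−β} sin((α−β)π))
                / (θ² + 2θ cos(απ) x^α + x^{2α})`. -/
noncomputable def xiFrac (α β x θ : ℝ) : ℝ :=
  (1 / Real.pi) *
    ((x ^ (2 * α - β) * Real.sin (β * Real.pi)
        - θ * x ^ (α - β) * Real.sin ((α - β) * Real.pi)) /
      (θ ^ 2 + 2 * θ * Real.cos (α * Real.pi) * x ^ α + x ^ (2 * α)))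

lemma Real.rpow_two_mul {x : ℝ} (hx : 0 ≤ x) (y : ℝ) : x ^ (2 * y) = (x ^ y) ^ 2 := by
  rw [mul_comm]
  exact_mod_cast rpow_mul_natCast hx y 2

lemma sin_sq_mul_sq_le_left (a b t : ℝ) :
    sin t ^ 2 * a ^ 2 ≤ a ^ 2 + 2 * a * cos t * b + b ^ 2 := by
  nlinarith [sin_sq_add_cos_sq t, sq_nonneg (a * cos t + b)]

lemma sin_sq_mul_sq_le_right (a b t : ℝ) :
    sin t ^ 2 * b ^ 2 ≤ a ^ 2 + 2 * a * cos t * b + b ^ 2 := by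
  nlinarith [sin_sq_add_cos_sq t, sq_nonneg (a + b * cos t)]

lemma two_mul_mul_one_add_cos_le (a b t : ℝ) :
    2 * a * b * (1 + cos t) ≤ a ^ 2 + 2 * a * cos t * b + b ^ 2 := by
  nlinarith [sq_nonneg (a - b)]

lemma one_add_cos_pos_of_sin_ne_zero {t : ℝ} (ht : sin t ≠ 0) : 0 < 1 + cos t := by
  have hs : 0 < sin t ^ 2 := by positivity
  nlinarith [sin_sq_add_cos_sq t, neg_one_le_cos t]

section xiFrac

variable {α β θ x : ℝ}

lemma abs_xiFrac_le (hsin : sin (α * π) ≠ 0) (hθ : 0 < θ) (hx : 0 < x) :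
    |xiFrac α β x θ| ≤
      (x ^ (2 * α - β) * |sin (β * π)| + θ * x ^ (α - β) * |sin ((α - β) * π)|) /
        (π * (θ ^ 2 + 2 * θ * cos (α * π) * x ^ α + x ^ (2 * α))) := by
  have hD : 0 < θ ^ 2 + 2 * θ * cos (α * π) * x ^ α + x ^ (2 * α) := by
    rw [rpow_two_mul hx.le]
    exact (by positivity : 0 < sin (α * π) ^ 2 * θ ^ 2).trans_le (sin_sq_mul_sq_le_left _ _ _)
  rw [xiFrac, abs_mul, abs_of_pos (by positivity : (0 : ℝ) < 1 / π), abs_div, abs_of_pos hD,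
    div_mul_div_comm, one_mul]
  gcongr
  refine (abs_sub _ _).trans_eq ?_
  simp only [abs_mul, abs_of_pos hθ, abs_of_pos (rpow_pos_of_pos hx _)]

lemma abs_xiFrac_le_div_sin_sq (hsin : sin (α * π) ≠ 0) (hθ : 0 < θ) (hx : 0 < x) :
    |xiFrac α β x θ| ≤
      (x ^ (2 * α - β) * |sin (β * π)| / θ ^ 2 + x ^ (α - β) * |sin ((α - β) * π)| / θ) /
        (π * sin (α * π) ^ 2) := by
  refine (abs_xiFrac_le hsin hθ hx).trans ?_
  have hD : sin (α * π) ^ 2 * θ ^ 2 ≤ θ ^ 2 + 2 * θ * cos (α * π) * x ^ α + x ^ (2 * α) := by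
    rw [rpow_two_mul hx.le]
    exact sin_sq_mul_sq_le_left _ _ _
  calc _ ≤ (x ^ (2 * α - β) * |sin (β * π)| + θ * x ^ (α - β) * |sin ((α - β) * π)|) /
        (π * (sin (α * π) ^ 2 * θ ^ 2)) := by gcongr
    _ = _ := by field_simp

lemma abs_xiFrac_le_mul_rpow_of_le_one {θ₁ : ℝ} (hα : 0 ≤ α) (hsin : sin (α * π) ≠ 0)
    (hθ₁ : 0 < θ₁) (hθ : θ₁ ≤ θ) (hx : 0 < x) (hx1 : x ≤ 1) :
    |xiFrac α β x θ| ≤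
      ((|sin (β * π)| / θ₁ ^ 2 + |sin ((α - β) * π)| / θ₁) / (π * sin (α * π) ^ 2)) *
        x ^ (α - β * (if α = β then 0 else 1)) := by
  set E := α - β * (if α = β then 0 else 1)
  have h₁ : x ^ (2 * α - β) ≤ x ^ E := by
    refine rpow_le_rpow_of_exponent_ge hx hx1 ?_
    simp only [E]
    split_ifs <;> linarith
  have h₂ : x ^ (α - β) * |sin ((α - β) * π)| = x ^ E * |sin ((α - β) * π)| := by
    by_cases hαβ : α = β <;> simp [E, hαβ]
  refine (abs_xiFrac_le_div_sin_sq hsin (hθ₁.trans_le hθ) hx).trans ?_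
  calc _ ≤ (x ^ E * |sin (β * π)| / θ₁ ^ 2 + x ^ E * |sin ((α - β) * π)| / θ₁) /
        (π * sin (α * π) ^ 2) := by rw [h₂]; gcongr
    _ = _ := by ring

lemma abs_xiFrac_le_mul_rpow_neg (hsin : sin (α * π) ≠ 0) (hθ : 0 < θ) (hx : 0 < x) :
    |xiFrac α β x θ| ≤
      (|sin (β * π)| / (π * sin (α * π) ^ 2)
          + |sin ((α - β) * π)| / (2 * π * (1 + cos (α * π)))) * x ^ (-β) := by
  refine (abs_xiFrac_le hsin hθ hx).trans ?_
  have hc := one_add_cos_pos_of_sin_ne_zero hsin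
  have hxα := rpow_pos_of_pos hx α
  have hD₁ : sin (α * π) ^ 2 * x ^ (2 * α) ≤
      θ ^ 2 + 2 * θ * cos (α * π) * x ^ α + x ^ (2 * α) := by
    rw [rpow_two_mul hx.le]
    exact sin_sq_mul_sq_le_right _ _ _
  have hD₂ : 2 * θ * x ^ α * (1 + cos (α * π)) ≤
      θ ^ 2 + 2 * θ * cos (α * π) * x ^ α + x ^ (2 * α) := by
    rw [rpow_two_mul hx.le]
    exact two_mul_mul_one_add_cos_le _ _ _
  rw [add_div, add_mul]
  gcongr ?_ + ?_
  · calc _ ≤ x ^ (2 * α - β) * |sin (β * π)| / (π * (sin (α * π) ^ 2 * x ^ (2 * α))) := by gcongr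
      _ = _ := by
          rw [sub_eq_add_neg, rpow_add hx]
          field_simp
  · calc _ ≤ θ * x ^ (α - β) * |sin ((α - β) * π)| /
            (π * (2 * θ * x ^ α * (1 + cos (α * π)))) := by gcongr
      _ = _ := by
          rw [sub_eq_add_neg, rpow_add hx]
          field_simp

end xiFrac

lemma sq_mul_rpow_le_of_abs_le {a x C p w : ℝ} (hx : 0 < x) (ha : |a| ≤ C * x ^ p) :
    |a| ^ 2 * x ^ w ≤ C ^ 2 * x ^ (2 * p + w) := by
  calc |a| ^ 2 * x ^ w ≤ (C * x ^ p) ^ 2 * x ^ w := by gcongr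
    _ = C ^ 2 * x ^ (2 * p + w) := by rw [rpow_add hx, rpow_two_mul hx.le]; ring

lemma setIntegral_sq_mul_rpow_le {f : ℝ → ℝ} {s : Set ℝ} {C p w : ℝ} (hs : MeasurableSet s)
    (hs₀ : s ⊆ Ioi 0) (hint : IntegrableOn (fun x ↦ x ^ (2 * p + w)) s)
    (hf : ∀ x ∈ s, |f x| ≤ C * x ^ p) :
    ∫ x in s, |f x| ^ 2 * x ^ w ≤ C ^ 2 * ∫ x in s, x ^ (2 * p + w) := by
  rw [← integral_const_mul]
  refine integral_mono_of_nonneg ?_ (hint.const_mul _) ?_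
  · filter_upwards [ae_restrict_mem hs] with x hx
    have := rpow_nonneg (hs₀ hx).le w
    positivity
  · filter_upwards [ae_restrict_mem hs] with x hx
    exact sq_mul_rpow_le_of_abs_le (hs₀ hx) (hf x hx)

lemma integrableOn_Ioc_zero_one_rpow {r : ℝ} (hr : -1 < r) :
    IntegrableOn (fun x ↦ x ^ r) (Ioc (0 : ℝ) 1) := by
  have h := intervalIntegral.intervalIntegrable_rpow' (a := 0) (b := 1) hr
  rwa [intervalIntegrable_iff, uIoc_of_le zero_le_one] at h

lemma integral_Ioc_zero_one_rpow {r : ℝ} (hr : -1 < r) :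
    ∫ x in Ioc (0 : ℝ) 1, x ^ r = 1 / (r + 1) := by
  rw [← intervalIntegral.integral_of_le zero_le_one, integral_rpow (Or.inl hr), one_rpow,
    zero_rpow (by linarith)]
  ring

lemma integral_Ioi_one_rpow {r : ℝ} (hr : r < -1) :
    ∫ x in Ioi (1 : ℝ), x ^ r = 1 / (-r - 1) := by
  rw [integral_Ioi_rpow_of_lt hr one_pos, one_rpow, neg_div, ← div_neg, neg_add']

theorem xiFrac_weighted_square_integral_bound_general
    (α β θ₁ δs ηs : ℝ)
    (hα : α ∈ Set.Ioo (1 / 2 : ℝ) 1)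
    (hθ₁ : 0 < θ₁)
    (hδ : δs < 1 + 2 * α - 2 * β * (if α = β then 0 else 1))
    (hη : ηs < 2 * β - 1)
    (θ : ℝ) (hθ : θ₁ ≤ θ) :
    (∫ x in Set.Ioc (0 : ℝ) 1, |xiFrac α β x θ| ^ 2 * x ^ (-δs)) +
        (∫ x in Set.Ioi (1 : ℝ), |xiFrac α β x θ| ^ 2 * x ^ ηs) ≤
      ((|Real.sin (β * Real.pi)| / θ₁ ^ 2 + |Real.sin ((α - β) * Real.pi)| / θ₁) /
            (Real.pi * Real.sin (α * Real.pi) ^ 2)) ^ 2 /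
          (1 + 2 * α - 2 * β * (if α = β then 0 else 1) - δs)
        + (|Real.sin (β * Real.pi)| / (Real.pi * Real.sin (α * Real.pi) ^ 2)
              + |Real.sin ((α - β) * Real.pi)| /
                  (2 * Real.pi * (1 + Real.cos (α * Real.pi)))) ^ 2 /
            (2 * β - 1 - ηs) := by
  have hsin : sin (α * π) ≠ 0 :=
    (sin_pos_of_pos_of_lt_pi (by nlinarith [hα.1, pi_pos]) (by nlinarith [hα.2, pi_pos])).ne'
  have hr₁ : -1 < 2 * (α - β * (if α = β then 0 else 1)) + -δs := by linarith
  have hr₂ : 2 * -β + ηs < -1 := by linarith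
  have small := setIntegral_sq_mul_rpow_le measurableSet_Ioc (fun x hx ↦ hx.1)
    (integrableOn_Ioc_zero_one_rpow hr₁) fun x hx ↦
      abs_xiFrac_le_mul_rpow_of_le_one (by linarith [hα.1]) hsin hθ₁ hθ hx.1 hx.2
  have large := setIntegral_sq_mul_rpow_le measurableSet_Ioi (Ioi_subset_Ioi zero_le_one)
    (integrableOn_Ioi_rpow_of_lt hr₂ one_pos) fun x hx ↦
      abs_xiFrac_le_mul_rpow_neg hsin (hθ₁.trans_le hθ) (one_pos.trans hx)
  rw [integral_Ioc_zero_one_rpow hr₁] at small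
  rw [integral_Ioi_one_rpow hr₂] at large
  calc _ ≤ _ := add_le_add small large
    _ = _ := by ring_nf

/-- Let `α ∈ (1/2,1)`, `β ∈ (1/2, 1/2+α)`, `θ₁ > 0`, and let `δ*, η* ∈ ℝ`
satisfy `δ* < 1 + 2α − 2β·1_{α≠β}` and `η* < 2β − 1`.  Then for every `θ ≥ θ₁`:
`∫_0^1 |ξ_{α,β}(x;θ)|² x^{−δ*} dx + ∫_1^∞ |ξ_{α,β}(x;θ)|² x^{η*} dx
  ≤ ((|sin(βπ)| θ₁^{−2} + |sin((α−β)π)| θ₁^{−1})/(π sin²(απ)))² / (1+2α−2β·1_{α≠β}−δ*)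
   + (|sin(βπ)|/(π sin²(απ)) + |sin((α−β)π)|/(2π(1+cos(απ))))² / (2β−1−η*)`. -/
theorem xiFrac_weighted_square_integral_bound
    (α β θ₁ δs ηs : ℝ)
    (hα : α ∈ Set.Ioo (1 / 2 : ℝ) 1)
    (hβ : β ∈ Set.Ioo (1 / 2 : ℝ) (1 / 2 + α))
    (hθ₁ : 0 < θ₁)
    (hδ : δs < 1 + 2 * α - 2 * β * (if α = β then 0 else 1))
    (hη : ηs < 2 * β - 1)
    (θ : ℝ) (hθ : θ₁ ≤ θ) :
    (∫ x in Set.Ioc (0 : ℝ) 1, |xiFrac α β x θ| ^ 2 * x ^ (-δs)) +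
        (∫ x in Set.Ioi (1 : ℝ), |xiFrac α β x θ| ^ 2 * x ^ ηs) ≤
      ((|Real.sin (β * Real.pi)| / θ₁ ^ 2 + |Real.sin ((α - β) * Real.pi)| / θ₁) /
            (Real.pi * Real.sin (α * Real.pi) ^ 2)) ^ 2 /
          (1 + 2 * α - 2 * β * (if α = β then 0 else 1) - δs)
        + (|Real.sin (β * Real.pi)| / (Real.pi * Real.sin (α * Real.pi) ^ 2)
              + |Real.sin ((α - β) * Real.pi)| /
                  (2 * Real.pi * (1 + Real.cos (α * Real.pi)))) ^ 2 /
            (2 * β - 1 - ηs) :=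
  xiFrac_weighted_square_integral_bound_general α β θ₁ δs ηs hα hθ₁ hδ hη θ hθ
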